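/- Let N = K·p^n + 1 where p is prime and gcd(K,p) = 1, and let a be any integer. If there exists j with 1 ≤ j ≤ n such that Φ_p(a^(K·p^(j-1))) ≡ 0 (mod N) and p^(2j) > K·p^n, then N is prime. -/

import Mathlib

/-!
Pocklington-style argument. Let `q` be a prime factor of `N`. Since `q ≠ p`, the vanishing of
`Φ_p(b)` for `b = c ^ p ^ (j-1)`, `c = a ^ K`, forces `b` to have order `p` in `ZMod q`, hence `c` has
order `p ^ j`, which divides `q - 1`. So `p ^ j < q`, and `N ≤ p ^ (2j) < q ^ 2` for every prime
factor `q`, which makes `N` prime.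
-/

open Finset

section GeomSum

variable {R : Type*} [Ring R] {p : ℕ} [hp : Fact p.Prime]

theorem orderOf_eq_prime_of_geom_sum_eq_zero {b : R} (hpR : (p : R) ≠ 0)
    (hb : ∑ i ∈ range p, b ^ i = 0) : orderOf b = p := by
  refine orderOf_eq_prime ?_ ?_
  · rw [← sub_eq_zero, ← geom_sum_mul, hb, zero_mul]
  · rintro rfl
    simp only [one_pow, sum_const, card_range, nsmul_eq_mul, mul_one] at hb
    exact hpR hb

theorem orderOf_eq_prime_pow_of_geom_sum_eq_zero {c : R} {m : ℕ} (hpR : (p : R) ≠ 0)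
    (hc : ∑ i ∈ range p, (c ^ p ^ m) ^ i = 0) : orderOf c = p ^ (m + 1) := by
  have hb := orderOf_eq_prime_of_geom_sum_eq_zero hpR hc
  refine orderOf_eq_prime_pow (fun h1 => ?_) ?_
  · rw [h1, orderOf_one] at hb
    exact hp.out.one_lt.ne hb
  · simpa only [pow_succ, pow_mul, hb] using pow_orderOf_eq_one (c ^ p ^ m)

end GeomSum

theorem Nat.prime_of_forall_prime_dvd_lt_sq {N : ℕ} (hN : 2 ≤ N)
    (h : ∀ q, q.Prime → q ∣ N → N < q ^ 2) : N.Prime := by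
  by_contra hNP
  have := h _ (Nat.minFac_prime (by omega)) (Nat.minFac_dvd N)
  have := Nat.minFac_sq_le_self (by omega) hNP
  omega

theorem sufficient_primality_general (p K n N : ℕ) (hp : p.Prime) (hK : 0 < K)
    (hn : 0 < n) (hN : N = K * p ^ n + 1) (a : ℤ)
    (h : ∃ j, 1 ≤ j ∧ j ≤ n ∧
      ∑ i ∈ Finset.range p, ((a : ZMod N) ^ (K * p ^ (j - 1))) ^ i = 0 ∧
      K * p ^ n < p ^ (2 * j)) : Nat.Prime N := by
  obtain ⟨j, hj, -, hsum, hsize⟩ := h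
  obtain ⟨m, rfl⟩ : ∃ m, j = m + 1 := ⟨j - 1, by omega⟩
  have := Fact.mk hp
  have hN2 : 2 ≤ N := by have := Nat.mul_pos hK (pow_pos hp.pos n); omega
  refine Nat.prime_of_forall_prime_dvd_lt_sq hN2 fun q hq hqN => ?_
  have := Fact.mk hq
  have hpq : (p : ZMod q) ≠ 0 := by
    rw [Ne, ZMod.natCast_eq_zero_iff, Nat.prime_dvd_prime_iff_eq hq hp]
    rintro rfl
    have : q ∣ K * q ^ n := dvd_mul_of_dvd_right (dvd_pow_self q hn.ne') K
    exact hq.one_lt.ne' (Nat.dvd_one.mp ((Nat.dvd_add_right this).mp (hN ▸ hqN)))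
  have hord : orderOf ((a : ZMod q) ^ K) = p ^ (m + 1) := by
    refine orderOf_eq_prime_pow_of_geom_sum_eq_zero hpq ?_
    simpa only [map_sum, map_pow, map_intCast, map_zero, ← pow_mul, Nat.add_sub_cancel] using
      congrArg (ZMod.castHom hqN (ZMod q)) hsum
  have hlt : p ^ (m + 1) < q := hord ▸ ZMod.orderOf_lt hq.one_lt _
  rw [pow_mul'] at hsize
  nlinarith

theorem sufficient_primality (p K n N : ℕ) (hp : p.Prime) (hK : 0 < K)
    (hn : 0 < n) (hKp : Nat.gcd K p = 1) (hN : N = K * p ^ n + 1) (a : ℤ)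
    (h : ∃ j, 1 ≤ j ∧ j ≤ n ∧
      ∑ i ∈ Finset.range p, ((a : ZMod N) ^ (K * p ^ (j - 1))) ^ i = 0 ∧
      K * p ^ n < p ^ (2 * j)) : Nat.Prime N :=
  sufficient_primality_general p K n N hp hK hn hN a h
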